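/- For every A ∈ (0,1) and every integer p ≥ 1, the complex sine function satisfies sin({z ∈ ℂ : dist(z,[-1,1]) < A/(p+1)}) ⊆ {z ∈ ℂ : dist(z,[-1,1]) < A/p}. Consequently, the function sin verifies the E(1) property. -/

import Mathlib

/-!
If `d = dist(z, [-1,1])` is attained at `t ∈ [-1,1]`, then `z` and `t` lie in the strip
`|Im ζ| ≤ d`, where `|sin'| = |cos| ≤ cosh d`; hence
`dist(sin z, [-1,1]) ≤ |sin z - sin t| ≤ d cosh d`. For `d < 1/(p+1)` we have
`cosh d ≤ e^d ≤ 1/(1-d) ≤ (p+1)/p`, which turns the radius `A/(p+1)` into `A/p`.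
-/

open Set

/-- The segment `[-1,1]` viewed as a subset of `ℂ`. -/
noncomputable def seg : Set ℂ := Complex.ofReal '' Icc (-1:ℝ) 1

/-- The neighborhood `[-1,1]_{k,A,n} = {z ∈ ℂ : dist(z,[-1,1]) < A n^{-1/k}}`. -/
noncomputable def nbhd (k A : ℝ) (n : ℕ) : Set ℂ :=
  {z : ℂ | Metric.infDist z seg < A * (n:ℝ) ^ (-(1:ℝ)/k)}

/-- `φ` verifies the `E(k)` property. -/
def EkProp (k : ℝ) (φ : ℂ → ℂ) : Prop :=
  ∃ τ : ℝ, 0 < τ ∧ ∀ A ∈ Set.Ioc (0:ℝ) τ, ∃ N : ℕ, 1 ≤ N ∧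
    ∀ p : ℕ, N ≤ p → φ '' nbhd k A (p+1) ⊆ nbhd k A p

open Metric

namespace Complex

theorem norm_cos_le_cosh_im (z : ℂ) : ‖cos z‖ ≤ Real.cosh z.im := by
  have hcos : cos z = (exp (z * I) + exp (-z * I)) / 2 := by rw [← two_cos]; ring
  calc ‖cos z‖ ≤ (‖exp (z * I)‖ + ‖exp (-z * I)‖) / 2 := by
        rw [hcos, norm_div, Complex.norm_two]
        gcongr
        exact norm_add_le _ _
    _ = Real.cosh z.im := by simp [norm_exp, Real.cosh_eq]; ring

theorem norm_sin_sub_sin_le_of_abs_im_le {r : ℝ} {z w : ℂ} (hz : |z.im| ≤ r)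
    (hw : |w.im| ≤ r) : ‖sin z - sin w‖ ≤ Real.cosh r * ‖z - w‖ := by
  have hstrip : Convex ℝ {ζ : ℂ | |ζ.im| ≤ r} := by
    have : {ζ : ℂ | |ζ.im| ≤ r} = imLm ⁻¹' Icc (-r) r := by ext; simp [abs_le]
    exact this ▸ (convex_Icc (-r) r).linear_preimage imLm
  refine hstrip.norm_image_sub_le_of_norm_deriv_le (fun ζ _ => differentiableAt_sin)
    (fun ζ hζ => ?_) hw hz
  rw [deriv_sin]
  exact (norm_cos_le_cosh_im ζ).trans (Real.cosh_le_cosh.2 (hζ.trans (le_abs_self r)))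

end Complex

theorem Real.cosh_le_one_div_one_sub {x : ℝ} (h0 : 0 ≤ x) (h1 : x < 1) :
    Real.cosh x ≤ 1 / (1 - x) := by
  have hexp : Real.exp (-x) ≤ Real.exp x := Real.exp_le_exp.2 (by linarith)
  calc Real.cosh x ≤ Real.exp x := by rw [Real.cosh_eq]; linarith
    _ ≤ 1 / (1 - x) := Real.exp_bound_div_one_sub_of_interval h0 h1

theorem isCompact_seg : IsCompact seg := isCompact_Icc.image Complex.continuous_ofReal

theorem seg_nonempty : seg.Nonempty := ⟨0, 0, by norm_num, by simp⟩

theorem infDist_sin_seg_le (z : ℂ) :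
    infDist (Complex.sin z) seg ≤ Real.cosh (infDist z seg) * infDist z seg := by
  obtain ⟨_, ⟨t, ht, rfl⟩, hdist⟩ := isCompact_seg.exists_infDist_eq_dist seg_nonempty z
  have hsin : Complex.sin t ∈ seg :=
    ⟨Real.sin t, ⟨Real.neg_one_le_sin t, Real.sin_le_one t⟩, Complex.ofReal_sin t⟩
  have hz : |z.im| ≤ infDist z seg := by
    simpa [hdist, dist_eq_norm] using Complex.abs_im_le_norm (z - t)
  have ht : |(t : ℂ).im| ≤ infDist z seg := by simpa using infDist_nonneg
  calc infDist (Complex.sin z) seg ≤ ‖Complex.sin z - Complex.sin t‖ :=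
        (infDist_le_dist_of_mem hsin).trans_eq (dist_eq_norm _ _)
    _ ≤ Real.cosh (infDist z seg) * ‖z - t‖ := Complex.norm_sin_sub_sin_le_of_abs_im_le hz ht
    _ = Real.cosh (infDist z seg) * infDist z seg := by rw [hdist, dist_eq_norm]

theorem sin_image_infDist_lt_subset {A : ℝ} (hA : A ≤ 1) {p : ℕ} (hp : 1 ≤ p) :
    Complex.sin '' {z : ℂ | infDist z seg < A / (p + 1)} ⊆
      {z : ℂ | infDist z seg < A / p} := by
  rintro _ ⟨z, hz, rfl⟩
  set d := infDist z seg
  have hp : (0 : ℝ) < p := by exact_mod_cast hp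
  have hd : d * (p + 1) < 1 := (lt_div_iff₀ (by positivity)).1 (hz.trans_le (by gcongr))
  have hd1 : d < 1 := by nlinarith [infDist_nonneg (x := z) (s := seg)]
  have hcosh : Real.cosh d ≤ (p + 1) / p :=
    calc Real.cosh d ≤ 1 / (1 - d) := Real.cosh_le_one_div_one_sub infDist_nonneg hd1
      _ ≤ (p + 1) / p := by
          rw [div_le_div_iff₀ (by linarith) hp]
          linarith
  calc infDist (Complex.sin z) seg ≤ Real.cosh d * d := infDist_sin_seg_le z
    _ ≤ (p + 1) / p * d := by gcongr; exact infDist_nonneg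
    _ < (p + 1) / p * (A / (p + 1)) := by gcongr; exact hz
    _ = A / p := by field_simp

theorem nbhd_one (A : ℝ) (n : ℕ) : nbhd 1 A n = {z : ℂ | infDist z seg < A / n} := by
  simp [nbhd, Real.rpow_neg_one, div_eq_mul_inv]

/-- For every `A ∈ (0,1)` and integer `p ≥ 1`,
`sin({z : dist(z,[-1,1]) < A/(p+1)}) ⊆ {z : dist(z,[-1,1]) < A/p}`; consequently the
complex sine function verifies the `E(1)` property. -/
theorem stmt11 :
    (∀ A : ℝ, A ∈ Set.Ioo (0:ℝ) 1 → ∀ p : ℕ, 1 ≤ p →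
      Complex.sin '' {z : ℂ | Metric.infDist z seg < A / (p+1)}
        ⊆ {z : ℂ | Metric.infDist z seg < A / p}) ∧
    EkProp 1 Complex.sin := by
  refine ⟨fun A hA p hp => sin_image_infDist_lt_subset hA.2.le hp,
    1, one_pos, fun A hA => ⟨1, le_rfl, fun p hp => ?_⟩⟩
  rw [nbhd_one, nbhd_one]
  exact_mod_cast sin_image_infDist_lt_subset hA.2 hp
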